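/- arXiv:1406.4775 — 3 statements merged into one kernel-verified Lean document; each statement's English description precedes it below -/
import Mathlib

section
/- Let G ~ N(0,1) and K(x) = E[((x+G)⁺)²] = (1+x²)Φ(x) + xφ(x), where φ and Φ are the standard Gaussian density and distribution function. Then the function z ↦ K(√z) is concave on [0,∞). -/
open MeasureTheory ProbabilityTheory Filter Topology

/-- The standard Gaussian density `φ(x) = e^{-x²/2}/√(2π)`. -/
noncomputable def gaussPhi (x : ℝ) : ℝ := Real.exp (-x ^ 2 / 2) / Real.sqrt (2 * Real.pi)

/-- The standard Gaussian distribution function `Φ(x) = ∫_{-∞}^x φ`. -/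
noncomputable def gaussCdf (x : ℝ) : ℝ := ((gaussianReal 0 1) (Set.Iic x)).toReal

/-- `K(x) = E[((x+G)⁺)²]` for `G ~ N(0,1)`. -/
noncomputable def Kfun (x : ℝ) : ℝ :=
  ∫ g : ℝ, (max (x + g) 0) ^ 2 ∂(gaussianReal 0 1)

/-!
By the symmetry of `G`, `K(x) = ∫_{g ≤ x} (x - g)² φ(g) dg`, and since `φ' = -g φ`, the function
`(1 + x²) Φ(g) + (2x - g) φ(g)` is a primitive of the integrand in `g` that vanishes at `-∞`;
evaluating it at `g = x` gives the closed form. Differentiating that, `K'(x) = 2x (Φ(x) + φ(x)/x)`,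
so `d/dz K(√z) = Φ(√z) + φ(√z)/√z`, which decreases in `z` because
`(Φ(x) + φ(x)/x)' = -φ(x)/x² < 0`.
-/

open Real Set

lemma gaussPhi_eq_gaussianPDFReal : gaussPhi = gaussianPDFReal 0 1 := by
  funext x
  simp [gaussPhi, gaussianPDFReal, div_eq_mul_inv, mul_comm]

lemma gaussPhi_pos (x : ℝ) : 0 < gaussPhi x := by
  unfold gaussPhi; positivity

lemma gaussPhi_neg (x : ℝ) : gaussPhi (-x) = gaussPhi x := by
  simp [gaussPhi]

lemma continuous_gaussPhi : Continuous gaussPhi := by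
  unfold gaussPhi; fun_prop

lemma hasDerivAt_gaussPhi (x : ℝ) : HasDerivAt gaussPhi (-x * gaussPhi x) x := by
  have h : HasDerivAt (fun x : ℝ => -x ^ 2 / 2) (-x) x :=
    ((hasDerivAt_pow 2 x).neg.div_const 2).congr_deriv (by ring)
  exact (h.exp.div_const (√(2 * π))).congr_deriv (by simp only [gaussPhi]; ring)

lemma integrable_pow_mul_gaussPhi (n : ℕ) : Integrable fun x : ℝ => x ^ n * gaussPhi x := by
  refine ((integrable_rpow_mul_exp_neg_mul_sq (b := 1 / 2) (by norm_num) (s := n)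
    (by linarith [n.cast_nonneg (α := ℝ)])).div_const (√(2 * π))).congr
    (ae_of_all _ fun x => ?_)
  simp only [gaussPhi, Real.rpow_natCast]
  ring_nf

lemma integrable_gaussPhi : Integrable gaussPhi := by
  simpa using integrable_pow_mul_gaussPhi 0

lemma tendsto_gaussPhi_atBot : Tendsto gaussPhi atBot (𝓝 0) :=
  tendsto_zero_of_hasDerivAt_of_integrableOn_Iic (a := 0) (fun x _ => hasDerivAt_gaussPhi x)
    (by simpa using (integrable_pow_mul_gaussPhi 1).neg.integrableOn)
    integrable_gaussPhi.integrableOn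

lemma tendsto_mul_gaussPhi_atBot : Tendsto (fun x => x * gaussPhi x) atBot (𝓝 0) := by
  refine tendsto_zero_of_hasDerivAt_of_integrableOn_Iic (a := 0)
    (f' := fun x => gaussPhi x - x ^ 2 * gaussPhi x) (fun x _ => ?_)
    (integrable_gaussPhi.sub (integrable_pow_mul_gaussPhi 2)).integrableOn
    (by simpa using (integrable_pow_mul_gaussPhi 1).integrableOn)
  exact ((hasDerivAt_id x).mul (hasDerivAt_gaussPhi x)).congr_deriv (by simp only [id]; ring)

lemma gaussCdf_eq_integral (x : ℝ) : gaussCdf x = ∫ g in Iic x, gaussPhi g := by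
  rw [gaussCdf, gaussianReal_apply_eq_integral 0 one_ne_zero,
    ENNReal.toReal_ofReal (integral_nonneg (gaussianPDFReal_nonneg 0 1)),
    gaussPhi_eq_gaussianPDFReal]

lemma tendsto_gaussCdf_atBot : Tendsto gaussCdf atBot (𝓝 0) := by
  have h : gaussCdf = cdf (gaussianReal 0 1) := by
    funext x; rw [cdf_eq_real, measureReal_def, gaussCdf]
  exact h ▸ tendsto_cdf_atBot _

lemma hasDerivAt_gaussCdf (x : ℝ) : HasDerivAt gaussCdf (gaussPhi x) x := by
  have hΦ : gaussCdf = fun y => gaussCdf 0 + ∫ t in (0 : ℝ)..y, gaussPhi t := by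
    funext y
    rw [gaussCdf_eq_integral, gaussCdf_eq_integral, ← intervalIntegral.integral_Iic_sub_Iic
      integrable_gaussPhi.integrableOn integrable_gaussPhi.integrableOn]
    ring
  rw [hΦ]
  exact (intervalIntegral.integral_hasDerivAt_right integrable_gaussPhi.intervalIntegrable
    (continuous_gaussPhi.stronglyMeasurableAtFilter _ _)
    continuous_gaussPhi.continuousAt).const_add _

lemma Kfun_eq_integral_Iic (x : ℝ) : Kfun x = ∫ g in Iic x, (x - g) ^ 2 * gaussPhi g := by
  rw [Kfun, integral_gaussianReal_eq_integral_smul one_ne_zero, ← gaussPhi_eq_gaussianPDFReal,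
    ← integral_neg_eq_self, ← integral_indicator measurableSet_Iic]
  congr 1 with g
  by_cases hg : g ≤ x
  · simp [indicator_of_mem (show g ∈ Iic x from hg), gaussPhi_neg, max_eq_left (sub_nonneg.2 hg),
      ← sub_eq_add_neg, mul_comm]
  · simp [indicator_of_notMem (show g ∉ Iic x from hg), max_eq_right (by linarith : x + -g ≤ 0)]

lemma hasDerivAt_Kfun_integrand_primitive (x g : ℝ) :
    HasDerivAt (fun g => (1 + x ^ 2) * gaussCdf g + (2 * x - g) * gaussPhi g)
      ((x - g) ^ 2 * gaussPhi g) g :=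
  (((hasDerivAt_gaussCdf g).const_mul (1 + x ^ 2)).add
    (((hasDerivAt_id g).const_sub (2 * x)).mul (hasDerivAt_gaussPhi g))).congr_deriv
      (by simp only [id]; ring)

lemma Kfun_eq (x : ℝ) : Kfun x = (1 + x ^ 2) * gaussCdf x + x * gaussPhi x := by
  have hlim : Tendsto (fun g => (1 + x ^ 2) * gaussCdf g + (2 * x - g) * gaussPhi g)
      atBot (𝓝 0) := by
    simpa [sub_mul] using (tendsto_gaussCdf_atBot.const_mul (1 + x ^ 2)).add
      ((tendsto_gaussPhi_atBot.const_mul (2 * x)).sub tendsto_mul_gaussPhi_atBot)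
  have hint : Integrable fun g => (x - g) ^ 2 * gaussPhi g := by
    refine ((integrable_gaussPhi.const_mul (x ^ 2)).sub
      (((integrable_pow_mul_gaussPhi 1).const_mul (2 * x)).sub
        (integrable_pow_mul_gaussPhi 2))).congr (ae_of_all _ fun g => ?_)
    simp only [Pi.sub_apply]; ring
  rw [Kfun_eq_integral_Iic, integral_Iic_of_hasDerivAt_of_tendsto'
    (fun g _ => hasDerivAt_Kfun_integrand_primitive x g) hint.integrableOn hlim]
  ring

lemma hasDerivAt_Kfun (x : ℝ) : HasDerivAt Kfun (2 * (x * gaussCdf x + gaussPhi x)) x := by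
  rw [show Kfun = fun x => (1 + x ^ 2) * gaussCdf x + x * gaussPhi x from funext Kfun_eq]
  exact ((((hasDerivAt_pow 2 x).const_add 1).mul (hasDerivAt_gaussCdf x)).add
    ((hasDerivAt_id x).mul (hasDerivAt_gaussPhi x))).congr_deriv (by simp only [id]; ring)

lemma antitoneOn_gaussCdf_add_gaussPhi_div :
    AntitoneOn (fun x => gaussCdf x + gaussPhi x / x) (Ioi 0) := by
  have hderiv : ∀ x ∈ Ioi (0 : ℝ),
      HasDerivAt (fun x => gaussCdf x + gaussPhi x / x) (-(gaussPhi x / x ^ 2)) x := by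
    intro x hx
    have hx0 : x ≠ 0 := (mem_Ioi.1 hx).ne'
    refine ((hasDerivAt_gaussCdf x).add ((hasDerivAt_gaussPhi x).div (hasDerivAt_id x)
      hx0)).congr_deriv ?_
    simp only [id]
    field_simp
    ring
  refine antitoneOn_of_hasDerivWithinAt_nonpos (f' := fun x => -(gaussPhi x / x ^ 2))
    (convex_Ioi 0)
    (fun x hx => (hderiv x hx).continuousAt.continuousWithinAt) ?_ ?_ <;> rw [interior_Ioi]
  · exact fun x hx => (hderiv x hx).hasDerivWithinAt
  · exact fun x _ => neg_nonpos.2 (div_nonneg (gaussPhi_pos x).le (sq_nonneg x))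

theorem concaveOn_comp_sqrt {f g : ℝ → ℝ} (hf : ContinuousOn f (Ici 0))
    (hf' : ∀ x, 0 < x → HasDerivAt f (2 * x * g x) x) (hg : AntitoneOn g (Ioi 0)) :
    ConcaveOn ℝ (Ici 0) (fun z => f (√z)) := by
  have hderiv : ∀ z, 0 < z → HasDerivAt (fun z => f (√z)) (g (√z)) z := fun z hz =>
    ((hf' _ (sqrt_pos.2 hz)).comp z (hasDerivAt_sqrt hz.ne')).congr_deriv
      (by field_simp [(sqrt_pos.2 hz).ne'])
  refine AntitoneOn.concaveOn_of_deriv (convex_Ici 0)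
    (hf.comp continuous_sqrt.continuousOn fun z _ => sqrt_nonneg z) ?_ ?_ <;> rw [interior_Ici]
  · exact fun z hz => (hderiv z hz).differentiableAt.differentiableWithinAt
  · intro a ha b hb hab
    rw [(hderiv a ha).deriv, (hderiv b hb).deriv]
    exact hg (sqrt_pos.2 ha) (sqrt_pos.2 hb) (sqrt_le_sqrt hab)

theorem K_sqrt_concave :
    (∀ x : ℝ, Kfun x = (1 + x ^ 2) * gaussCdf x + x * gaussPhi x) ∧
    ConcaveOn ℝ (Set.Ici 0) (fun z : ℝ => Kfun (Real.sqrt z)) := by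
  have hK : Continuous Kfun :=
    continuous_iff_continuousAt.2 fun x => (hasDerivAt_Kfun x).continuousAt
  refine ⟨Kfun_eq, concaveOn_comp_sqrt hK.continuousOn (fun x hx => ?_)
    antitoneOn_gaussCdf_add_gaussPhi_div⟩
  exact (hasDerivAt_Kfun x).congr_deriv (by field_simp [hx.ne'])
end

section
/- For every M < ∞ and δ > 0 there exists ε₀ > 0 such that for every ε ∈ (0, ε₀], every probability law μ_V ∈ 𝒫_ε, and every x ∈ [0, M]: |D_V(x) − (1/2 + x²)| ≤ δ, |F_V(x) − x/√(1/2 + x²)| ≤ δ, and |G_V(x) − (1/2)/√(1/2 + x²)| ≤ δ. That is, as ε(V) → 0, uniformly over 𝒫 and over x in compact subsets of [0,∞): D_V(x) → 1/2 + x², F_V(x) → x/√(1/2 + x²), and G_V(x) → (1/2)/√(1/2 + x²). -/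
open MeasureTheory ProbabilityTheory Filter Topology

/-- `D_V(x) = E[((xV+G)⁺)²]` where `V ~ μ` and `G ~ N(0,1)`, independent. -/
noncomputable def Dfun (μ : Measure ℝ) (x : ℝ) : ℝ :=
  ∫ p : ℝ × ℝ, (max (x * p.1 + p.2) 0) ^ 2 ∂(μ.prod (gaussianReal 0 1))

/-- `F_V(x) = E[V(xV+G)⁺]/√(D_V(x))`. -/
noncomputable def Ffun (μ : Measure ℝ) (x : ℝ) : ℝ :=
  (∫ p : ℝ × ℝ, p.1 * max (x * p.1 + p.2) 0 ∂(μ.prod (gaussianReal 0 1))) / Real.sqrt (Dfun μ x)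

/-- `G_V(x) = E[G(xV+G)⁺]/√(D_V(x))`. -/
noncomputable def Gfun (μ : Measure ℝ) (x : ℝ) : ℝ :=
  (∫ p : ℝ × ℝ, p.2 * max (x * p.1 + p.2) 0 ∂(μ.prod (gaussianReal 0 1))) / Real.sqrt (Dfun μ x)

/-- `μ ∈ 𝒫`: a probability measure supported on `[0,∞)` with second moment 1. -/
def lawOK (μ : Measure ℝ) : Prop :=
  IsProbabilityMeasure μ ∧ (∀ᵐ v ∂μ, 0 ≤ v) ∧ ∫ v, v ^ 2 ∂μ = 1

/-- `μ ∈ 𝒫_ε`: in addition `μ({0}) ≥ 1 - ε`. -/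
def lawSparse (μ : Measure ℝ) (ε : ℝ) : Prop :=
  lawOK μ ∧ 1 - ε ≤ (μ {(0 : ℝ)}).toReal

/-!
Write `a = xV ≥ 0`. The elementary bounds `|((a + G)⁺)² - (a² + 2aG + (G⁺)²)| ≤ 2a|G|`,
`|(a + G)⁺ - a| ≤ |G|` and `|(a + G)⁺ - G⁺| ≤ a` put `D_V(x)`, `E[V(xV + G)⁺]` and
`E[G(xV + G)⁺]` within `2x · E V · E|G|`, `E V · E|G|` and `x · E V · E|G|` of `x² + 1/2`, `x`
and `1/2`, using `E V² = 1`, `E G = 0` and `E (G⁺)² = 1/2`. As `V` vanishes off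
an event of probability at most `ε`, AM-GM gives `E V ≤ √ε`, while `E|G| ≤ 1`. Once `ε` is
small, `D_V(x) ≥ 1/4`, where dividing by the square root is Lipschitz, which transfers the bounds
to `F_V` and `G_V`.
-/

open scoped NNReal

lemma sq_max_zero_le_sq (g : ℝ) : (max g 0) ^ 2 ≤ g ^ 2 := by
  rw [← sq_abs g]
  exact pow_le_pow_left₀ (le_max_right _ _) (max_le (le_abs_self g) (abs_nonneg g)) 2

lemma abs_sq_max_add_sub_le {a : ℝ} (ha : 0 ≤ a) (g : ℝ) :
    |(max (a + g) 0) ^ 2 - (a ^ 2 + 2 * a * g + (max g 0) ^ 2)| ≤ 2 * a * |g| := by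
  rcases le_total 0 g with hg | hg
  · rw [max_eq_left (by linarith), max_eq_left hg, abs_of_nonneg hg,
      show (a + g) ^ 2 - (a ^ 2 + 2 * a * g + g ^ 2) = 0 by ring, abs_zero]
    positivity
  rcases le_total 0 (a + g) with hag | hag
  · rw [max_eq_left hag, max_eq_right hg, abs_of_nonpos hg, abs_le]
    constructor <;> nlinarith
  · rw [max_eq_right hag, max_eq_right hg, abs_of_nonpos hg, abs_le]
    constructor <;> nlinarith

lemma abs_max_add_sub_le {a : ℝ} (ha : 0 ≤ a) (g : ℝ) : |max (a + g) 0 - a| ≤ |g| := by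
  simpa [max_eq_left ha] using abs_max_sub_max_le_abs (a + g) a 0

lemma abs_max_add_sub_max_le {a : ℝ} (ha : 0 ≤ a) (g : ℝ) :
    |max (a + g) 0 - max g 0| ≤ a := by
  simpa [abs_of_nonneg ha] using abs_max_sub_max_le_abs (a + g) g 0

lemma abs_div_sqrt_sub_div_sqrt_le {N a D T : ℝ} (hD : 1 / 4 ≤ D) (hT : 1 / 4 ≤ T) :
    |N / √D - a / √T| ≤ 2 * |N - a| + 4 * |a| * |D - T| := by
  have hsD : 1 / 2 ≤ √D := Real.le_sqrt_of_sq_le (by linarith)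
  have hsT : 1 / 2 ≤ √T := Real.le_sqrt_of_sq_le (by linarith)
  have hsqrt : |√T - √D| ≤ |D - T| := by
    have hfactor : |D - T| = |√T - √D| * (√T + √D) := by
      rw [← abs_of_pos (by linarith : 0 < √T + √D), ← abs_mul, abs_sub_comm]
      congr 1
      linear_combination Real.sq_sqrt (by linarith : 0 ≤ D) - Real.sq_sqrt (by linarith : 0 ≤ T)
    rw [hfactor]
    exact le_mul_of_one_le_right (abs_nonneg _) (by linarith)
  have hsplit : N / √D - a / √T = (N - a) / √D + a * (√T - √D) / (√D * √T) := by
    field_simp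
    ring
  rw [hsplit]
  refine (abs_add_le _ _).trans (add_le_add ?_ ?_)
  · rw [abs_div, abs_of_pos (by linarith : 0 < √D), div_le_iff₀ (by linarith)]
    nlinarith [abs_nonneg (N - a)]
  · rw [abs_div, abs_mul, abs_of_pos (by positivity : 0 < √D * √T),
      div_le_iff₀ (by positivity)]
    have h14 : 1 / 4 ≤ √D * √T := by nlinarith
    nlinarith [mul_le_mul_of_nonneg_left hsqrt (abs_nonneg a), abs_nonneg a, abs_nonneg (D - T),
      mul_nonneg (abs_nonneg a) (abs_nonneg (D - T))]

lemma abs_integral_sub_le_of_abs_sub_le {α : Type*} [MeasurableSpace α] {μ : Measure α}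
    {f r s : α → ℝ} (hf : AEStronglyMeasurable f μ) (hr : Integrable r μ)
    (hs : Integrable s μ) (hfr : ∀ᵐ p ∂μ, |f p - r p| ≤ s p) :
    |∫ p, f p ∂μ - ∫ p, r p ∂μ| ≤ ∫ p, s p ∂μ := by
  have hfr' : Integrable (fun p => f p - r p) μ :=
    hs.mono' (hf.sub hr.aestronglyMeasurable) (by simpa only [Real.norm_eq_abs] using hfr)
  have hfi : Integrable f μ := (hfr'.add hr).congr (ae_of_all _ fun p => sub_add_cancel _ _)
  rw [← integral_sub hfi hr]
  exact (abs_integral_le_integral_abs).trans (integral_mono_ae hfr'.abs hs hfr)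

lemma integral_sq_max_zero_of_map_neg {ν : Measure ℝ} (hsymm : ν.map (fun g => -g) = ν)
    (hν : Integrable (fun g => g ^ 2) ν) :
    ∫ g, (max g 0) ^ 2 ∂ν = (∫ g, g ^ 2 ∂ν) / 2 := by
  have hpos : Integrable (fun g => (max g 0) ^ 2) ν :=
    hν.mono' (by fun_prop) (ae_of_all _ fun g => by
      simpa [abs_of_nonneg (sq_nonneg (max g 0))] using sq_max_zero_le_sq g)
  have hneg : Integrable (fun g => (max (-g) 0) ^ 2) ν :=
    hν.mono' (by fun_prop) (ae_of_all _ fun g => by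
      simpa [abs_of_nonneg (sq_nonneg (max (-g) 0))] using sq_max_zero_le_sq (-g))
  have hflip : ∫ g, (max (-g) 0) ^ 2 ∂ν = ∫ g, (max g 0) ^ 2 ∂ν := by
    conv_rhs => rw [← hsymm]
    rw [integral_map measurable_neg.aemeasurable (by fun_prop)]
  have hsplit : (fun g : ℝ => g ^ 2) = fun g => (max g 0) ^ 2 + (max (-g) 0) ^ 2 := by
    funext g
    rcases le_total g 0 with h | h <;> simp [h]
  rw [hsplit, integral_add hpos hneg, hflip]
  ring

lemma integral_abs_le_of_integrable_sq {ν : Measure ℝ} [IsProbabilityMeasure ν]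
    (hν : Integrable (fun g => g ^ 2) ν) :
    ∫ g, |g| ∂ν ≤ (1 + ∫ g, g ^ 2 ∂ν) / 2 := by
  have hbound : Integrable (fun g : ℝ => (1 + g ^ 2) / 2) ν :=
    ((integrable_const 1).add hν).div_const 2
  calc ∫ g, |g| ∂ν ≤ ∫ g, (1 + g ^ 2) / 2 ∂ν :=
        integral_mono_of_nonneg (ae_of_all _ fun g => abs_nonneg g) hbound
          (ae_of_all _ fun g => by nlinarith [sq_abs g, sq_nonneg (|g| - 1)])
    _ = (1 + ∫ g, g ^ 2 ∂ν) / 2 := by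
        rw [integral_div, integral_add (integrable_const 1) hν]
        simp

lemma integral_sq_gaussianReal_zero (v : ℝ≥0) : ∫ g, g ^ 2 ∂gaussianReal 0 v = v := by
  have h := variance_fun_id_gaussianReal (μ := 0) (v := v)
  rw [variance_eq_integral aemeasurable_id', integral_id_gaussianReal] at h
  simpa using h

lemma integral_sq_max_zero_gaussianReal (v : ℝ≥0) :
    ∫ g, (max g 0) ^ 2 ∂gaussianReal 0 v = v / 2 := by
  rw [integral_sq_max_zero_of_map_neg (by simpa using gaussianReal_map_neg (μ := 0) (v := v))
    (memLp_id_gaussianReal (μ := 0) (v := v) 2).integrable_sq, integral_sq_gaussianReal_zero]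

lemma integral_abs_gaussianReal_le_one : ∫ g, |g| ∂gaussianReal 0 1 ≤ 1 := by
  have h := integral_abs_le_of_integrable_sq
    (memLp_id_gaussianReal (μ := 0) (v := 1) 2).integrable_sq
  rw [integral_sq_gaussianReal_zero, NNReal.coe_one] at h
  linarith

section ProductBounds

variable {μ ν : Measure ℝ} [IsProbabilityMeasure μ] [IsProbabilityMeasure ν] {x : ℝ}

lemma abs_integral_sq_max_add_sub_le (hμ0 : ∀ᵐ v ∂μ, 0 ≤ v) (hμ : MemLp id 2 μ)
    (hν : MemLp id 2 ν) (hx : 0 ≤ x) :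
    |∫ p, (max (x * p.1 + p.2) 0) ^ 2 ∂μ.prod ν -
        (x ^ 2 * ∫ v, v ^ 2 ∂μ + 2 * x * ((∫ v, v ∂μ) * ∫ g, g ∂ν)
          + ∫ g, (max g 0) ^ 2 ∂ν)|
      ≤ 2 * x * ((∫ v, v ∂μ) * ∫ g, |g| ∂ν) := by
  have hμ1 := hμ.integrable one_le_two
  have hν1 := hν.integrable one_le_two
  have i1 : Integrable (fun p : ℝ × ℝ => x ^ 2 * p.1 ^ 2) (μ.prod ν) :=
    (hμ.integrable_sq.comp_fst ν).const_mul _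
  have i2 : Integrable (fun p : ℝ × ℝ => 2 * x * (p.1 * p.2)) (μ.prod ν) :=
    (hμ1.mul_prod hν1).const_mul _
  have i3 : Integrable (fun p : ℝ × ℝ => (max p.2 0) ^ 2) (μ.prod ν) :=
    hν.pos_part.integrable_sq.comp_snd μ
  have i12 : Integrable (fun p : ℝ × ℝ => x ^ 2 * p.1 ^ 2 + 2 * x * (p.1 * p.2))
      (μ.prod ν) := i1.add i2
  have h := abs_integral_sub_le_of_abs_sub_le
    (f := fun p : ℝ × ℝ => (max (x * p.1 + p.2) 0) ^ 2)
    (r := fun p => x ^ 2 * p.1 ^ 2 + 2 * x * (p.1 * p.2) + (max p.2 0) ^ 2)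
    (s := fun p => 2 * x * (p.1 * |p.2|)) (by fun_prop) (i12.add i3)
    ((hμ1.mul_prod hν1.abs).const_mul (2 * x)) (by
      filter_upwards [Measure.quasiMeasurePreserving_fst.ae hμ0] with p hp
      calc _ = |(max (x * p.1 + p.2) 0) ^ 2
              - ((x * p.1) ^ 2 + 2 * (x * p.1) * p.2 + (max p.2 0) ^ 2)| := by ring_nf
        _ ≤ 2 * (x * p.1) * |p.2| := abs_sq_max_add_sub_le (mul_nonneg hx hp) p.2
        _ = _ := by ring)
  rwa [integral_add i12 i3, integral_add i1 i2, integral_const_mul, integral_const_mul,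
    integral_const_mul, integral_prod_mul (fun v : ℝ => v) (fun g : ℝ => g),
    integral_prod_mul (fun v : ℝ => v) (fun g : ℝ => |g|),
    integral_fun_fst (fun v : ℝ => v ^ 2),
    integral_fun_snd (fun g : ℝ => (max g 0) ^ 2), probReal_univ, probReal_univ, one_smul,
    one_smul] at h

lemma abs_integral_fst_mul_max_add_sub_le (hμ0 : ∀ᵐ v ∂μ, 0 ≤ v) (hμ : MemLp id 2 μ)
    (hν : Integrable id ν) (hx : 0 ≤ x) :
    |∫ p, p.1 * max (x * p.1 + p.2) 0 ∂μ.prod ν - x * ∫ v, v ^ 2 ∂μ|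
      ≤ (∫ v, v ∂μ) * ∫ g, |g| ∂ν := by
  have h := abs_integral_sub_le_of_abs_sub_le
    (f := fun p : ℝ × ℝ => p.1 * max (x * p.1 + p.2) 0)
    (r := fun p => x * p.1 ^ 2) (s := fun p => p.1 * |p.2|) (by fun_prop)
    ((hμ.integrable_sq.comp_fst ν).const_mul x) ((hμ.integrable one_le_two).mul_prod hν.abs) (by
      filter_upwards [Measure.quasiMeasurePreserving_fst.ae hμ0] with p hp
      calc |p.1 * max (x * p.1 + p.2) 0 - x * p.1 ^ 2|
          = p.1 * |max (x * p.1 + p.2) 0 - x * p.1| := by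
            rw [← abs_of_nonneg hp, ← abs_mul, abs_of_nonneg hp]; ring_nf
        _ ≤ p.1 * |p.2| := mul_le_mul_of_nonneg_left (abs_max_add_sub_le (mul_nonneg hx hp) _) hp)
  rwa [integral_const_mul, integral_fun_fst (fun v : ℝ => v ^ 2), probReal_univ, one_smul,
    integral_prod_mul (fun v : ℝ => v) (fun g : ℝ => |g|)] at h

lemma abs_integral_snd_mul_max_add_sub_le (hμ0 : ∀ᵐ v ∂μ, 0 ≤ v) (hμ : Integrable id μ)
    (hν : MemLp id 2 ν) (hx : 0 ≤ x) :
    |∫ p, p.2 * max (x * p.1 + p.2) 0 ∂μ.prod ν - ∫ g, (max g 0) ^ 2 ∂ν|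
      ≤ x * ((∫ v, v ∂μ) * ∫ g, |g| ∂ν) := by
  have h := abs_integral_sub_le_of_abs_sub_le
    (f := fun p : ℝ × ℝ => p.2 * max (x * p.1 + p.2) 0)
    (r := fun p => (max p.2 0) ^ 2) (s := fun p => x * (p.1 * |p.2|)) (by fun_prop)
    (hν.pos_part.integrable_sq.comp_snd μ)
    ((hμ.mul_prod (hν.integrable one_le_two).abs).const_mul x) (by
      filter_upwards [Measure.quasiMeasurePreserving_fst.ae hμ0] with p hp
      have hsq : (max p.2 0) ^ 2 = p.2 * max p.2 0 := by
        rcases le_total p.2 0 with h | h <;> simp [h, sq]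
      calc |p.2 * max (x * p.1 + p.2) 0 - (max p.2 0) ^ 2|
          = |p.2| * |max (x * p.1 + p.2) 0 - max p.2 0| := by rw [hsq, ← abs_mul, mul_sub]
        _ ≤ |p.2| * (x * p.1) :=
            mul_le_mul_of_nonneg_left (abs_max_add_sub_max_le (mul_nonneg hx hp) _) (abs_nonneg _)
        _ = x * (p.1 * |p.2|) := by ring)
  rwa [integral_const_mul, integral_fun_snd (fun g : ℝ => (max g 0) ^ 2), probReal_univ, one_smul,
    integral_prod_mul (fun v : ℝ => v) (fun g : ℝ => |g|)] at h

end ProductBounds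

lemma integral_id_le_sqrt_of_measureReal_compl_zero_le {μ : Measure ℝ} [IsFiniteMeasure μ]
    (hμ : MemLp id 2 μ) (hμ2 : ∫ v, v ^ 2 ∂μ = 1) {ε : ℝ} (hε : 0 < ε)
    (hμ0 : μ.real {0}ᶜ ≤ ε) :
    ∫ v, v ∂μ ≤ √ε := by
  set t := √ε
  have ht : 0 < t := Real.sqrt_pos.2 hε
  have hsq : Integrable (fun v : ℝ => v ^ 2) μ := hμ.integrable_sq
  have hind : Integrable (Set.indicator {(0 : ℝ)}ᶜ (1 : ℝ → ℝ)) μ :=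
    (integrable_const 1).indicator (measurableSet_singleton 0).compl
  -- AM-GM off the atom at `0`: `v ≤ (t v² + t⁻¹) / 2`.
  have hamgm :
      ∀ v : ℝ, v ≤ (t * v ^ 2 + t⁻¹ * Set.indicator {(0 : ℝ)}ᶜ (1 : ℝ → ℝ) v) / 2 := by
    intro v
    by_cases hv : v = 0
    · simp [hv]
    rw [Set.indicator_of_mem (by simpa using hv), Pi.one_apply, le_div_iff₀ two_pos,
      ← sub_nonneg]
    have : t * v ^ 2 + t⁻¹ * 1 - v * 2 = t⁻¹ * (t * v - 1) ^ 2 := by field_simp; ring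
    rw [this]
    positivity
  calc ∫ v, v ∂μ
      ≤ ∫ v, (t * v ^ 2 + t⁻¹ * Set.indicator {(0 : ℝ)}ᶜ (1 : ℝ → ℝ) v) / 2 ∂μ :=
        integral_mono (hμ.integrable one_le_two)
          (((hsq.const_mul t).add (hind.const_mul t⁻¹)).div_const 2) hamgm
    _ = (t + t⁻¹ * μ.real {0}ᶜ) / 2 := by
        rw [integral_div, integral_add (hsq.const_mul t) (hind.const_mul t⁻¹),
          integral_const_mul, integral_const_mul, integral_indicator_one
            (measurableSet_singleton 0).compl]
        simp [hμ2]
    _ ≤ (t + t⁻¹ * t ^ 2) / 2 := by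
        gcongr
        rwa [Real.sq_sqrt hε.le]
    _ = t := by field_simp; ring

lemma lawOK.memLp_id {μ : Measure ℝ} (h : lawOK μ) : MemLp id 2 μ :=
  (memLp_two_iff_integrable_sq aestronglyMeasurable_id).2
    (Integrable.of_integral_ne_zero (f := fun v => v ^ 2) (by rw [h.2.2]; exact one_ne_zero))

namespace lawSparse

variable {μ : Measure ℝ} {ε x : ℝ}

lemma integral_mul_integral_abs_gaussianReal_le (h : lawSparse μ ε) (hε : 0 < ε) :
    (∫ v, v ∂μ) * ∫ g, |g| ∂gaussianReal 0 1 ≤ √ε := by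
  obtain ⟨hμ, hsparse⟩ := h
  have := hμ.1
  have hmean : ∫ v, v ∂μ ≤ √ε :=
    integral_id_le_sqrt_of_measureReal_compl_zero_le hμ.memLp_id hμ.2.2 hε (by
      rw [probReal_compl_eq_one_sub (measurableSet_singleton 0)]
      exact sub_le_comm.1 hsparse)
  calc (∫ v, v ∂μ) * ∫ g, |g| ∂gaussianReal 0 1 ≤ √ε * 1 :=
        mul_le_mul hmean integral_abs_gaussianReal_le_one
          (integral_nonneg fun g => abs_nonneg g) (Real.sqrt_nonneg ε)
    _ = √ε := mul_one _

lemma abs_Dfun_sub_le (h : lawSparse μ ε) (hε : 0 < ε) (hx : 0 ≤ x) :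
    |Dfun μ x - (1 / 2 + x ^ 2)| ≤ 2 * x * √ε := by
  have := h.1.1
  have hD := abs_integral_sq_max_add_sub_le h.1.2.1 h.1.memLp_id
    (memLp_id_gaussianReal (μ := 0) (v := 1) 2) hx
  rw [h.1.2.2, integral_id_gaussianReal, integral_sq_max_zero_gaussianReal, NNReal.coe_one] at hD
  calc |Dfun μ x - (1 / 2 + x ^ 2)|
      = |Dfun μ x - (x ^ 2 * 1 + 2 * x * ((∫ v, v ∂μ) * 0) + 1 / 2)| := by ring_nf
    _ ≤ 2 * x * ((∫ v, v ∂μ) * ∫ g, |g| ∂gaussianReal 0 1) := hD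
    _ ≤ 2 * x * √ε := by gcongr; exact h.integral_mul_integral_abs_gaussianReal_le hε

lemma quarter_le_Dfun (h : lawSparse μ ε) (hε : 0 < ε) (hx : 0 ≤ x)
    (hsmall : 8 * x * √ε ≤ 1) :
    1 / 4 ≤ Dfun μ x := by
  have := (abs_le.1 (h.abs_Dfun_sub_le hε hx)).1
  nlinarith

lemma abs_Ffun_sub_le (h : lawSparse μ ε) (hε : 0 < ε) (hx : 0 ≤ x)
    (hsmall : 8 * x * √ε ≤ 1) :
    |Ffun μ x - x / √(1 / 2 + x ^ 2)| ≤ 2 * √ε + 8 * x ^ 2 * √ε := by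
  have := h.1.1
  have hN := abs_integral_fst_mul_max_add_sub_le h.1.2.1 h.1.memLp_id
    ((memLp_id_gaussianReal (μ := 0) (v := 1) 1).integrable le_rfl) hx
  rw [h.1.2.2, mul_one] at hN
  calc |Ffun μ x - x / √(1 / 2 + x ^ 2)|
      ≤ 2 * |(∫ p, p.1 * max (x * p.1 + p.2) 0 ∂μ.prod (gaussianReal 0 1)) - x|
          + 4 * |x| * |Dfun μ x - (1 / 2 + x ^ 2)| :=
        abs_div_sqrt_sub_div_sqrt_le (h.quarter_le_Dfun hε hx hsmall) (by nlinarith)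
    _ ≤ 2 * √ε + 4 * x * (2 * x * √ε) := by
        rw [abs_of_nonneg hx]
        gcongr
        · exact hN.trans (h.integral_mul_integral_abs_gaussianReal_le hε)
        · exact h.abs_Dfun_sub_le hε hx
    _ = 2 * √ε + 8 * x ^ 2 * √ε := by ring

lemma abs_Gfun_sub_le (h : lawSparse μ ε) (hε : 0 < ε) (hx : 0 ≤ x)
    (hsmall : 8 * x * √ε ≤ 1) :
    |Gfun μ x - 1 / 2 / √(1 / 2 + x ^ 2)| ≤ 6 * x * √ε := by
  have := h.1.1
  have hN := abs_integral_snd_mul_max_add_sub_le h.1.2.1 (h.1.memLp_id.integrable one_le_two)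
    (memLp_id_gaussianReal (μ := 0) (v := 1) 2) hx
  rw [integral_sq_max_zero_gaussianReal, NNReal.coe_one] at hN
  calc |Gfun μ x - 1 / 2 / √(1 / 2 + x ^ 2)|
      ≤ 2 * |(∫ p, p.2 * max (x * p.1 + p.2) 0 ∂μ.prod (gaussianReal 0 1)) - 1 / 2|
          + 4 * |1 / 2| * |Dfun μ x - (1 / 2 + x ^ 2)| :=
        abs_div_sqrt_sub_div_sqrt_le (h.quarter_le_Dfun hε hx hsmall) (by nlinarith)
    _ ≤ 2 * (x * √ε) + 4 * |1 / 2| * (2 * x * √ε) := by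
        gcongr
        · exact hN.trans (by gcongr; exact h.integral_mul_integral_abs_gaussianReal_le hε)
        · exact h.abs_Dfun_sub_le hε hx
    _ = 6 * x * √ε := by norm_num; ring

lemma abs_sub_limits_le (h : lawSparse μ ε) (hε : 0 < ε) {K : ℝ} (hK : 1 ≤ K)
    (hx : x ∈ Set.Icc 0 K) (hsmall : 8 * K * √ε ≤ 1) :
    |Dfun μ x - (1 / 2 + x ^ 2)| ≤ 10 * K ^ 2 * √ε ∧
    |Ffun μ x - x / √(1 / 2 + x ^ 2)| ≤ 10 * K ^ 2 * √ε ∧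
    |Gfun μ x - 1 / 2 / √(1 / 2 + x ^ 2)| ≤ 10 * K ^ 2 * √ε := by
  obtain ⟨hx0, hxK⟩ := hx
  have hs := Real.sqrt_nonneg ε
  have hsmall' : 8 * x * √ε ≤ 1 := le_trans (by gcongr) hsmall
  have hxs : x * √ε ≤ K ^ 2 * √ε := by gcongr; nlinarith
  have hx2s : x ^ 2 * √ε ≤ K ^ 2 * √ε := by gcongr
  have hs' : √ε ≤ K ^ 2 * √ε := le_mul_of_one_le_left hs (by nlinarith)
  refine ⟨(h.abs_Dfun_sub_le hε hx0).trans ?_, (h.abs_Ffun_sub_le hε hx0 hsmall').trans ?_,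
    (h.abs_Gfun_sub_le hε hx0 hsmall').trans ?_⟩ <;> linarith

end lawSparse

theorem FGD_uniform_limits_sparse (M δ : ℝ) (hδ : 0 < δ) :
    ∃ ε₀ : ℝ, 0 < ε₀ ∧
      ∀ ε : ℝ, 0 < ε → ε ≤ ε₀ →
        ∀ μ : Measure ℝ, lawSparse μ ε →
          ∀ x : ℝ, x ∈ Set.Icc (0 : ℝ) M →
            |Dfun μ x - (1 / 2 + x ^ 2)| ≤ δ ∧
            |Ffun μ x - x / Real.sqrt (1 / 2 + x ^ 2)| ≤ δ ∧
            |Gfun μ x - (1 / 2) / Real.sqrt (1 / 2 + x ^ 2)| ≤ δ := by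
  set K := max M 1
  have hK : 1 ≤ K := le_max_right M 1
  set s₀ := min (δ / (10 * K ^ 2)) (1 / (8 * K))
  have hs₀ : 0 < s₀ := by positivity
  refine ⟨s₀ ^ 2, by positivity, fun ε hε hε₀ μ hμ x ⟨hx, hxM⟩ => ?_⟩
  have hs : √ε ≤ s₀ := by simpa [Real.sqrt_sq hs₀.le] using Real.sqrt_le_sqrt hε₀
  have hsδ : 10 * K ^ 2 * √ε ≤ δ := by
    have := hs.trans (min_le_left _ _)
    rwa [le_div_iff₀ (by positivity), mul_comm] at this
  have hsmall : 8 * K * √ε ≤ 1 := by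
    have := hs.trans (min_le_right _ _)
    rwa [le_div_iff₀ (by positivity), mul_comm] at this
  obtain ⟨hD, hF, hG⟩ :=
    hμ.abs_sub_limits_le hε hK ⟨hx, hxM.trans (le_max_left M 1)⟩ hsmall
  exact ⟨hD.trans hsδ, hF.trans hsδ, hG.trans hsδ⟩
end

section
/- Let ψ : ℝ² → ℝ be pseudo-Lipschitz. Suppose the sequences of vectors u = u(n) ∈ ℝⁿ and ũ = ũ(n) ∈ ℝⁿ satisfy (1/n)‖u(n) − ũ(n)‖₂² → 0 and limsup_n (1/n)‖ũ(n)‖₂² < ∞, and u₀ = u₀(n) ∈ ℝⁿ satisfies sup_n ‖u₀(n)‖₂ < ∞. If lim_{n→∞} (1/n) Σᵢ ψ(ũᵢ, √n (u₀)ᵢ) exists, then lim_{n→∞} (1/n) Σᵢ ψ(uᵢ, √n (u₀)ᵢ) exists and equals the same limit. -/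
open MeasureTheory Filter Topology

/-- `ψ : ℝ² → ℝ` is pseudo-Lipschitz: there is `L > 0` with
`|ψ(x) − ψ(y)| ≤ L (1 + ‖x‖₂ + ‖y‖₂) ‖x − y‖₂` (Euclidean norms on ℝ²). -/
def PseudoLipschitz (ψ : ℝ → ℝ → ℝ) : Prop :=
  ∃ L : ℝ, 0 < L ∧ ∀ x₁ x₂ y₁ y₂ : ℝ,
    |ψ x₁ x₂ - ψ y₁ y₂| ≤
      L * (1 + Real.sqrt (x₁ ^ 2 + x₂ ^ 2) + Real.sqrt (y₁ ^ 2 + y₂ ^ 2)) *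
        Real.sqrt ((x₁ - y₁) ^ 2 + (x₂ - y₂) ^ 2)

/-! With `yᵢ = √n (u₀)ᵢ`, the pseudo-Lipschitz bound in the first variable and Cauchy–Schwarz give
`|(1/n) Σ ψ(uᵢ, yᵢ) − (1/n) Σ ψ(ũᵢ, yᵢ)| ≤ L √Aₙ √εₙ`, where `εₙ = (1/n) ‖u − ũ‖²` and
`Aₙ ≤ 3 (1 + (1/n) ‖u‖² + (1/n) ‖ũ‖² + 2 ‖u₀‖²)`; the scaling by `√n` makes the last term
`(1/n) ‖y‖² = ‖u₀‖²`. Since `(1/n) ‖u‖² ≤ 2 εₙ + (2/n) ‖ũ‖²`, `Aₙ` stays bounded, so the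
difference is `O(√εₙ) → 0`. -/

open Finset

theorem one_add_sqrt_add_sqrt_le {p q : ℝ} (hp : 0 ≤ p) (hq : 0 ≤ q) :
    1 + √p + √q ≤ √(3 * (1 + p + q)) := by
  refine Real.le_sqrt_of_sq_le ?_
  nlinarith [Real.sq_sqrt hp, Real.sq_sqrt hq, sq_nonneg (√p - √q), sq_nonneg (1 - √p),
    sq_nonneg (1 - √q)]

theorem PseudoLipschitz.exists_abs_sub_le {ψ : ℝ → ℝ → ℝ} (hψ : PseudoLipschitz ψ) :
    ∃ L, 0 ≤ L ∧ ∀ x x' y,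
      |ψ x y - ψ x' y| ≤ L * √(3 * (1 + x ^ 2 + x' ^ 2 + 2 * y ^ 2)) * |x - x'| := by
  obtain ⟨L, hL, hψ⟩ := hψ
  refine ⟨L, hL.le, fun x x' y => (hψ x y x' y).trans ?_⟩
  rw [sub_self, zero_pow two_ne_zero, add_zero, Real.sqrt_sq_eq_abs]
  gcongr
  calc 1 + √(x ^ 2 + y ^ 2) + √(x' ^ 2 + y ^ 2)
      ≤ √(3 * (1 + (x ^ 2 + y ^ 2) + (x' ^ 2 + y ^ 2))) :=
        one_add_sqrt_add_sqrt_le (by positivity) (by positivity)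
    _ = √(3 * (1 + x ^ 2 + x' ^ 2 + 2 * y ^ 2)) := by ring_nf

section WeightedSums

variable {ι : Type*} [Fintype ι] {c : ℝ}

theorem mul_sum_mul_le_sqrt_mul_sqrt (hc : 0 ≤ c) (a d : ι → ℝ) :
    c * ∑ i, a i * d i ≤ √(c * ∑ i, a i ^ 2) * √(c * ∑ i, d i ^ 2) := by
  rw [Real.sqrt_mul hc, Real.sqrt_mul hc, mul_mul_mul_comm, Real.mul_self_sqrt hc]
  exact mul_le_mul_of_nonneg_left (Real.sum_mul_le_sqrt_mul_sqrt _ _ _) hc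

theorem mul_sum_sq_le_two_mul_add_two_mul (hc : 0 ≤ c) (u v : ι → ℝ) :
    c * ∑ i, u i ^ 2 ≤ 2 * (c * ∑ i, (u i - v i) ^ 2) + 2 * (c * ∑ i, v i ^ 2) := by
  have h : ∑ i, u i ^ 2 ≤ 2 * ∑ i, (u i - v i) ^ 2 + 2 * ∑ i, v i ^ 2 := by
    simp only [mul_sum, ← sum_add_distrib]
    exact sum_le_sum fun i _ => by nlinarith [sq_nonneg (u i - 2 * v i)]
  linarith [mul_le_mul_of_nonneg_left h hc]

theorem abs_mul_sum_sub_mul_sum_le {ψ : ℝ → ℝ → ℝ} {L : ℝ} (hL : 0 ≤ L) (hc : 0 ≤ c)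
    (hψ : ∀ x x' y,
      |ψ x y - ψ x' y| ≤ L * √(3 * (1 + x ^ 2 + x' ^ 2 + 2 * y ^ 2)) * |x - x'|)
    (u v y : ι → ℝ) :
    |c * ∑ i, ψ (u i) (y i) - c * ∑ i, ψ (v i) (y i)| ≤
      L * √(3 * (c * Fintype.card ι + c * ∑ i, u i ^ 2 + c * ∑ i, v i ^ 2
        + 2 * (c * ∑ i, y i ^ 2))) * √(c * ∑ i, (u i - v i) ^ 2) := by
  set w : ι → ℝ := fun i => √(3 * (1 + u i ^ 2 + v i ^ 2 + 2 * y i ^ 2))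
  have hw : ∀ i, w i ^ 2 = 3 * (1 + u i ^ 2 + v i ^ 2 + 2 * y i ^ 2) :=
    fun i => Real.sq_sqrt (by positivity)
  calc |c * ∑ i, ψ (u i) (y i) - c * ∑ i, ψ (v i) (y i)|
      = c * |∑ i, (ψ (u i) (y i) - ψ (v i) (y i))| := by
        rw [← mul_sub, ← sum_sub_distrib, abs_mul, abs_of_nonneg hc]
    _ ≤ c * ∑ i, L * (w i * |u i - v i|) := by
        gcongr
        refine (abs_sum_le_sum_abs _ _).trans (sum_le_sum fun i _ => ?_)
        exact (hψ _ _ _).trans_eq (mul_assoc _ _ _)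
    _ = L * (c * ∑ i, w i * |u i - v i|) := by rw [← mul_sum]; ring
    _ ≤ L * (√(c * ∑ i, w i ^ 2) * √(c * ∑ i, |u i - v i| ^ 2)) :=
        mul_le_mul_of_nonneg_left (mul_sum_mul_le_sqrt_mul_sqrt hc _ _) hL
    _ = _ := by
        simp only [hw, sq_abs, ← mul_sum, sum_add_distrib, sum_const, card_univ, nsmul_eq_mul,
          mul_one]
        ring_nf

end WeightedSums

theorem pseudoLipschitz_transfer
    (ψ : ℝ → ℝ → ℝ) (hψ : PseudoLipschitz ψ)
    (u utilde u₀ : ∀ n : ℕ, Fin n → ℝ)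
    (hdiff : Tendsto (fun n : ℕ => (n : ℝ)⁻¹ * ∑ i, (u n i - utilde n i) ^ 2)
      atTop (𝓝 0))
    (hbdd : ∃ C : ℝ, ∀ᶠ n : ℕ in atTop, (n : ℝ)⁻¹ * ∑ i, (utilde n i) ^ 2 ≤ C)
    (hu₀ : ∃ C : ℝ, ∀ n : ℕ, Real.sqrt (∑ i, (u₀ n i) ^ 2) ≤ C)
    (l : ℝ)
    (hlim : Tendsto (fun n : ℕ => (n : ℝ)⁻¹ * ∑ i, ψ (utilde n i) (Real.sqrt n * u₀ n i))
      atTop (𝓝 l)) :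
    Tendsto (fun n : ℕ => (n : ℝ)⁻¹ * ∑ i, ψ (u n i) (Real.sqrt n * u₀ n i))
      atTop (𝓝 l) := by
  obtain ⟨L, hL, hψL⟩ := hψ.exists_abs_sub_le
  obtain ⟨C, hC⟩ := hbdd
  obtain ⟨C₀, hC₀⟩ := hu₀
  set ε : ℕ → ℝ := fun n => (n : ℝ)⁻¹ * ∑ i, (u n i - utilde n i) ^ 2
  set K : ℝ := 3 * (1 + (2 + 2 * C) + C + 2 * C₀ ^ 2)
  have hbound : ∀ᶠ n : ℕ in atTop,
      dist ((n : ℝ)⁻¹ * ∑ i, ψ (utilde n i) (√n * u₀ n i))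
        ((n : ℝ)⁻¹ * ∑ i, ψ (u n i) (√n * u₀ n i)) ≤ L * √K * √(ε n) := by
    filter_upwards [hC, hdiff.eventually (eventually_le_nhds one_pos), eventually_ne_atTop 0]
      with n hCn hεn hn
    have hn' : (n : ℝ) ≠ 0 := Nat.cast_ne_zero.2 hn
    have hcard : (n : ℝ)⁻¹ * (Fintype.card (Fin n) : ℝ) = 1 := by simp [hn']
    have hu := mul_sum_sq_le_two_mul_add_two_mul (inv_nonneg.2 n.cast_nonneg) (u n) (utilde n)
    have hy : (n : ℝ)⁻¹ * ∑ i, (√n * u₀ n i) ^ 2 = ∑ i, u₀ n i ^ 2 := by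
      simp_rw [mul_pow, Real.sq_sqrt n.cast_nonneg, ← mul_sum, inv_mul_cancel_left₀ hn']
    have hu₀sq := (Real.sqrt_le_iff.mp (hC₀ n)).2
    rw [Real.dist_eq, abs_sub_comm]
    refine (abs_mul_sum_sub_mul_sum_le hL (inv_nonneg.2 n.cast_nonneg) hψL _ _ _).trans ?_
    gcongr
    linarith
  refine hlim.congr_dist (squeeze_zero' (Eventually.of_forall fun n => dist_nonneg) hbound ?_)
  simpa using ((Real.continuous_sqrt.tendsto 0).comp hdiff).const_mul (L * √K)
end
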